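/- arXiv:2209.12566 — 5 statements merged into one kernel-verified Lean document; each statement's English description precedes it below -/
import Mathlib

section
/- Vogan's conjecture for category O: let M ∈ O_{χ_λ}. If the generalized Z(h)-infinitesimal character subspace H_D^{g,h}(M)^{ξ_μ} of the Dirac cohomology is nonzero, then μ ∈ t* is W-conjugate to λ, where W is the Weyl group of g. -/
/-- Vogan's conjecture for category `O`:  Let `M ∈ O_{χ_λ}` and let
`V = M ⊗ S` with Dirac operator `D`.  `Zg = Z(g)` acts on `V` via `πg (z) = z ⊗ 1`,
`Zh = Z(h_Δ)` acts via `πh`, commuting with `D`.  By Huang–Pandžić/Kostant there is a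
homomorphism `ζ : Z(g) → Z(h_Δ)` with `z ⊗ 1 = ζ(z) + Da + aD` (`a` commuting with the
central element `D²`), compatible with the Harish–Chandra homomorphisms: if
`ξ_μ ∘ ζ = χ_λ` then `μ` is `W`-conjugate to `λ`.  If the generalized
`ξ_μ`-infinitesimal character subspace of the Dirac cohomology of `M` is nonzero —
witnessed by `x ∈ ker D`, `x ∉ im D`, with `(πh z − ξ_μ(z))ⁿ x ∈ im D ∩ ker D` for all
`z ∈ Z(h)` — then `μ` is `W`-conjugate to `λ`. -/
theorem stmt6 (tstar : Type*) (W : Type*) [Group W] [MulAction W tstar]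
    (Zg Zh : Type*) [CommRing Zg] [CommRing Zh]
    (ζ : Zg →+* Zh)
    (χ : tstar → (Zg →+* ℂ)) (ξ : tstar → (Zh →+* ℂ))
    -- compatibility of ζ with the Harish-Chandra maps:
    (hHC : ∀ l m : tstar, (ξ m).comp ζ = χ l → m ∈ MulAction.orbit W l)
    (V : Type*) [AddCommGroup V] [Module ℂ V]
    (D : Module.End ℂ V)
    (πg : Zg →+* Module.End ℂ V) (πh : Zh →+* Module.End ℂ V)
    (hπh : ∀ z : Zh, Commute D (πh z))
    -- the Huang-Pandžić/Kostant identity z ⊗ 1 = ζ(z) + Da + aD :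
    (hVogan : ∀ z : Zg, ∃ a : Module.End ℂ V,
      Commute (D ^ 2) a ∧ πg z = πh (ζ z) + D * a + a * D)
    (l m : tstar)
    -- M ∈ O_{χ_λ} : Z(g) acts on M ⊗ S with generalized infinitesimal character χ_λ :
    (hM : ∀ (z : Zg) (v : V), ∃ n : ℕ,
      ((πg z - χ l z • (1 : Module.End ℂ V)) ^ n) v = 0)
    -- a nonzero class in H_D(M)^{ξ_μ} :
    (x : V) (hxker : D x = 0) (hxim : x ∉ LinearMap.range D)
    (hxξ : ∀ z : Zh, ∃ n : ℕ,
      ((πh z - ξ m z • (1 : Module.End ℂ V)) ^ n) x ∈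
        LinearMap.range D ⊓ LinearMap.ker D) :
    m ∈ MulAction.orbit W l := by
  apply hHC l m
  ext z
  simp only [RingHom.comp_apply]
  by_contra hne
  obtain ⟨a, haD2, ha⟩ := hVogan z
  set S : Submodule ℂ V := LinearMap.range D ⊓ LinearMap.ker D with hS
  set A : Module.End ℂ V := πh (ζ z) with hAdef
  set c : ℂ := ξ m (ζ z) with hc
  set d : ℂ := χ l z with hd
  have hAD : D * A = A * D := (hπh (ζ z)).eq
  have hDA : ∀ v, D (A v) = A (D v) := fun v => by
    rw [← Module.End.mul_apply, hAD, Module.End.mul_apply]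
  have he : c - d ≠ 0 := sub_ne_zero.mpr hne
  set e : ℂ := c - d with hedef
  set T : Module.End ℂ V := A - c • 1 with hT
  set B : Module.End ℂ V := A - d • 1 with hB
  have hBT : B = T + e • 1 := by
    rw [hT, hB, hedef, sub_smul]
    abel
  have hTB : Commute T B := by
    rw [hBT]; exact (Commute.refl T).add_right ((Commute.one_right T).smul_right e)
  have hAS : ∀ v ∈ S, A v ∈ S := by
    rintro v ⟨⟨w, rfl⟩, hv2⟩
    have hv2' : D (D w) = 0 := hv2
    exact ⟨⟨A w, hDA w⟩, by
      show D (A (D w)) = 0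
      rw [hDA, hv2', map_zero]⟩
  have hTS : ∀ v ∈ S, T v ∈ S := fun v hv => by
    have hTv : T v = A v - c • v := by simp [hT]
    rw [hTv]; exact S.sub_mem (hAS v hv) (S.smul_mem c hv)
  have hBS : ∀ v ∈ S, B v ∈ S := fun v hv => by
    have hBv : B v = A v - d • v := by simp [hB]
    rw [hBv]; exact S.sub_mem (hAS v hv) (S.smul_mem d hv)
  have hPv : ∀ v, D v = 0 → D ((πg z) v) = 0 ∧ (πg z) v - A v ∈ S := by
    intro v hv
    have h1 : (πg z) v = A v + D (a v) := by
      rw [ha]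
      simp [LinearMap.add_apply, Module.End.mul_apply, hv]
    have hDDa : D (D (a v)) = 0 := by
      have h2 : (D ^ 2) (a v) = a ((D ^ 2) v) := by
        rw [← Module.End.mul_apply, haD2.eq, Module.End.mul_apply]
      have h3 : (D ^ 2 : Module.End ℂ V) v = 0 := by
        simp [pow_two, Module.End.mul_apply, hv]
      calc D (D (a v)) = (D ^ 2) (a v) := by simp [pow_two, Module.End.mul_apply]
        _ = a ((D ^ 2) v) := h2
        _ = 0 := by rw [h3, map_zero]
    constructor
    · rw [h1, map_add, hDA, hv, map_zero, zero_add, hDDa]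
    · rw [h1]
      have : A v + D (a v) - A v = D (a v) := by abel
      rw [this]
      exact ⟨⟨a v, rfl⟩, hDDa⟩
  set G : Module.End ℂ V := πg z - d • 1 with hG
  have hGapp : ∀ v, G v = (πg z) v - d • v := fun v => by simp [hG]
  have hclaim : ∀ k : ℕ, D ((G ^ k) x) = 0 ∧ (B ^ k) x - (G ^ k) x ∈ S := by
    intro k
    induction k with
    | zero => simp [hxker]
    | succ k ih =>
      obtain ⟨ih1, ih2⟩ := ih
      have h1 : (G ^ (k + 1)) x = G ((G ^ k) x) := by
        rw [pow_succ', Module.End.mul_apply]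
      have h2 : (B ^ (k + 1)) x = B ((B ^ k) x) := by
        rw [pow_succ', Module.End.mul_apply]
      set u : V := (G ^ k) x with hu
      have hPu := hPv u ih1
      constructor
      · rw [h1, hGapp, map_sub, hPu.1, map_smul, ih1, smul_zero, sub_zero]
      · have hBu : B u = A u - d • u := by simp [hB]
        have key : B ((B ^ k) x) - G u = B ((B ^ k) x - u) + (A u - (πg z) u) := by
          rw [hGapp, map_sub, hBu]; abel
        rw [h1, h2, key]
        refine S.add_mem (hBS _ ih2) ?_
        have := S.neg_mem hPu.2
        rwa [neg_sub] at this
  obtain ⟨N, hN⟩ := hM z x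
  have hN' : (G ^ N) x = 0 := hN
  have hBN : (B ^ N) x ∈ S := by
    have := (hclaim N).2
    rwa [hN', sub_zero] at this
  obtain ⟨n, hn⟩ := hxξ (ζ z)
  have hn' : (T ^ n) x ∈ S := hn
  have hbin : ∀ (N : ℕ) (v : V), T v ∈ S → (B ^ N) v - e ^ N • v ∈ S := by
    intro N
    induction N with
    | zero => intro v hv; simp
    | succ N ih =>
      intro v hv
      have h1 : (B ^ (N + 1)) v = (B ^ N) (B v) := by
        rw [pow_succ, Module.End.mul_apply]
      have hBv : B v = T v + e • v := by rw [hBT]; simp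
      have hTBv : T (B v) ∈ S := by
        have h2 : T (B v) = B (T v) := by
          rw [← Module.End.mul_apply, hTB.eq, Module.End.mul_apply]
        rw [h2]; exact hBS _ hv
      have hIH := ih (B v) hTBv
      have key : (B ^ (N + 1)) v - e ^ (N + 1) • v
          = ((B ^ N) (B v) - e ^ N • (B v)) + e ^ N • (T v) := by
        rw [h1, hBv, smul_add, smul_smul, ← pow_succ]
        abel
      rw [key]
      exact S.add_mem hIH (S.smul_mem _ hv)
  have hdown : ∀ (j : ℕ) (v : V), (T ^ j) v ∈ S → (B ^ N) v ∈ S → v ∈ S := by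
    intro j
    induction j with
    | zero => intro v h _; simpa using h
    | succ j ih =>
      intro v hj hBv
      have hTv : T v ∈ S := by
        apply ih (T v)
        · have h1 : (T ^ j) (T v) = (T ^ (j + 1)) v := by
            rw [pow_succ, Module.End.mul_apply]
          rw [h1]; exact hj
        · have h2 : (B ^ N) (T v) = T ((B ^ N) v) := by
            rw [← Module.End.mul_apply, ← (hTB.pow_right N).eq, Module.End.mul_apply]
          rw [h2]; exact hTS _ hBv
      have h3 := hbin N v hTv
      have h4 : e ^ N • v ∈ S := by
        have := S.sub_mem hBv h3
        simpa using this
      have hne' : e ^ N ≠ 0 := pow_ne_zero _ he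
      have := S.smul_mem (e ^ N)⁻¹ h4
      rwa [smul_smul, inv_mul_cancel₀ hne', one_smul] at this
  have hxS : x ∈ S := hdown n x hn' hBN
  exact hxim hxS.1
end

section
/- Abstract Vogan argument: let D be an element of an associative algebra A acting on a module V such that D² is central in A, let x ∈ ker D(V) with image x̃ ≠ 0 in ker D / (im D ∩ ker D), and suppose z·x = (c + Da + aD)·x where c is a scalar acting on x and a ∈ A. If z acts on x̃ by a scalar χ(z), then χ(z) = c. -/
/-- abstract Vogan argument: Let `D` act on `V` with `D²` "central"
(here: commuting with `a`), let `x ∈ ker D` with nonzero image `x̃` in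
`ker D / (im D ∩ ker D)` (i.e. `x ∉ im D`).  Suppose `z x = c x + (Da + aD) x` and `z`
acts on `x̃` by the scalar `χz` (i.e. `z x − χz x ∈ im D ∩ ker D`).  Then `χz = c`. -/
theorem stmt7 {V : Type*} [AddCommGroup V] [Module ℂ V]
    (D a z : Module.End ℂ V)
    (hcentral : Commute (D ^ 2) a)
    (x : V) (hxker : D x = 0) (hxim : x ∉ LinearMap.range D)
    (c χz : ℂ)
    (hz : z x = c • x + (D * a + a * D) x)
    (hscalar : z x - χz • x ∈ LinearMap.range D ⊓ LinearMap.ker D) :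
    χz = c := by
  by_contra hne
  have hne' : c - χz ≠ 0 := sub_ne_zero.mpr (Ne.symm hne)
  obtain ⟨u, hu⟩ : z x - χz • x ∈ LinearMap.range D := hscalar.1
  have key : (c - χz) • x = D (u - a x) := by
    have h1 : (D * a + a * D) x = D (a x) := by
      simp [Module.End.mul_apply, hxker]
    have : z x - χz • x = (c - χz) • x + D (a x) := by
      rw [hz, h1, sub_smul]; abel
    rw [this] at hu
    rw [map_sub]
    rw [hu]; abel
  exact hxim ⟨(c - χz)⁻¹ • (u - a x), by
    rw [map_smul, ← key, smul_smul, inv_mul_cancel₀ hne', one_smul]⟩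
end

section
/- Let (g,k) be a Hermitian symmetric pair and M a unitary module in O. Then the Dirac cohomology equals the kernel: H_D^{g,k}(M) ≅ ker D_{g,k}(M), and ker D_{g,k}(M) ≅ H^•(p⁺, M) ⊗ ℂ_{ρ−ρ_k} ≅ H_•(p⁻, M) ⊗ ℂ_{ρ−ρ_k}, where H^•(p⁺,M) is nilpotent Lie algebra cohomology and H_•(p⁻,M) is nilpotent Lie algebra homology. -/
/-!
Since `C⁺² = C⁻² = 0`, the Laplacian `D² = C⁺C⁻ + C⁻C⁺` commutes with `C⁺` and `C⁻`. On a
generalized eigenspace of `D²` with eigenvalue `μ ≠ 0` every cocycle is a coboundary (induction on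
the nilpotency order of `D² - μ`), so, decomposing along these eigenspaces, every cohomology class
has a representative in the generalized `0`-eigenspace. Skew-adjointness of `D` gives
`im D ∩ ker D = 0`, so that eigenspace is `ker D`; moreover `ker D ⊆ ker C⁺ ∩ ker C⁻` meets
`im C⁺` and `im C⁻` trivially. Hence `ker D` is a complement of the coboundaries in the cocycles.
-/

open LinearMap (ker range)

theorem commute_mul_add_mul_of_mul_self_eq_zero {R : Type*} [Ring R] {p : R} (hp : p * p = 0)
    (q : R) : Commute (p * q + q * p) p := by
  rw [Commute, SemiconjBy, add_mul, mul_add, mul_assoc, mul_assoc, hp, mul_zero, add_zero,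
    ← mul_assoc p p, hp, zero_mul, zero_add]

section Field

variable {K V : Type*} [Field K] [AddCommGroup V] [Module K V]

theorem Module.End.ker_le_iSup_ker_inf_maxGenEigenspace {f g : Module.End K V} (hfg : Commute f g)
    (htop : ⨆ μ, f.maxGenEigenspace μ = ⊤) :
    ker g ≤ ⨆ μ, ker g ⊓ f.maxGenEigenspace μ := by
  intro x hx
  have hx' : x ∈ ⨆ μ, f.maxGenEigenspace μ := htop ▸ Submodule.mem_top
  obtain ⟨m, hm, rfl⟩ := (Submodule.mem_iSup_iff_exists_finsupp _ _).mp hx'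
  have hgm : ∀ μ ∈ m.support, g (m μ) = 0 :=
    (iSupIndep_iff_finsetSum_eq_zero_imp_eq_zero _).mp f.independent_maxGenEigenspace m.support
      (fun μ ↦ g (m μ)) (fun μ _ ↦ f.mapsTo_maxGenEigenspace_of_comm hfg μ (hm μ))
      (by rw [← map_sum]; exact hx)
  refine (Submodule.mem_iSup_iff_exists_finsupp _ _).mpr ⟨m, fun μ ↦ ⟨?_, hm μ⟩, rfl⟩
  by_cases hμ : μ ∈ m.support
  · exact hgm μ hμ
  · simp [Finsupp.notMem_support_iff.mp hμ]

theorem LinearMap.ker_inf_maxGenEigenspace_le_range {p : Module.End K V} (hp : p * p = 0)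
    (q : Module.End K V) {μ : K} (hμ : μ ≠ 0) :
    ker p ⊓ (p * q + q * p).maxGenEigenspace μ ≤ range p := by
  rintro v ⟨hpv : p v = 0, hv⟩
  obtain ⟨k, hk⟩ := (Module.End.mem_maxGenEigenspace _ _ _).mp hv
  clear hv
  set a := p * q + q * p - μ • 1
  have hap : Commute a p := (commute_mul_add_mul_of_mul_self_eq_zero hp q).sub_left
    ((Commute.one_left p).smul_left μ)
  induction k generalizing v with
  | zero =>
    rw [pow_zero, Module.End.one_apply] at hk
    exact hk ▸ zero_mem _
  | succ k ih =>
    have hpa : p (a v) = 0 := by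
      rw [← Module.End.mul_apply, ← hap.eq, Module.End.mul_apply, hpv, map_zero]
    obtain ⟨w, hw⟩ := ih hpa (by rwa [← Module.End.mul_apply, ← pow_succ])
    -- `μ • v = p (q v) - a v` because `p v = 0`
    refine ⟨μ⁻¹ • (q v - w), ?_⟩
    rw [map_smul, map_sub, hw]
    simp [a, hpv, smul_smul, inv_mul_cancel₀ hμ]

theorem LinearMap.ker_le_range_sup_maxGenEigenspace_zero {p : Module.End K V} (hp : p * p = 0)
    {q : Module.End K V} (htop : ⨆ μ, (p * q + q * p).maxGenEigenspace μ = ⊤) :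
    ker p ≤ range p ⊔ (p * q + q * p).maxGenEigenspace 0 := by
  refine (Module.End.ker_le_iSup_ker_inf_maxGenEigenspace
    (commute_mul_add_mul_of_mul_self_eq_zero hp q) htop).trans (iSup_le fun μ ↦ ?_)
  rcases eq_or_ne μ 0 with rfl | hμ
  · exact le_sup_of_le_right inf_le_right
  · exact le_sup_of_le_left (ker_inf_maxGenEigenspace_le_range hp q hμ)

end Field

section Ring

variable {R M : Type*} [Ring R] [AddCommGroup M] [Module R M]

theorem LinearMap.ker_add_le_ker_left {S T : Module.End R M} (hST : Disjoint (range S) (ker T))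
    (hT : T * T = 0) : ker (S + T) ≤ ker S := by
  intro x hx
  have hSx : S x = -T x := eq_neg_of_add_eq_zero_left hx
  refine Submodule.disjoint_def.mp hST _ ⟨x, rfl⟩ ?_
  rw [LinearMap.mem_ker, hSx, map_neg, ← Module.End.mul_apply, hT, LinearMap.zero_apply, neg_zero]

theorem LinearMap.ker_pow_eq_ker {f : Module.End R M} (hf : Disjoint (range f) (ker f)) {n : ℕ}
    (hn : n ≠ 0) : ker (f ^ n) = ker f := by
  induction n with
  | zero => exact absurd rfl hn
  | succ n ih =>
    rcases eq_or_ne n 0 with rfl | hn'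
    · rw [pow_one]
    · ext x
      rw [pow_succ', LinearMap.mem_ker, Module.End.mul_apply, ← ih hn']
      refine ⟨fun h ↦ ?_, fun h ↦ by rw [LinearMap.mem_ker.mp h, map_zero]⟩
      obtain ⟨m, rfl⟩ := Nat.exists_eq_succ_of_ne_zero hn'
      exact Submodule.disjoint_def.mp hf _ ⟨(f ^ m) x, by rw [← Module.End.mul_apply, ← pow_succ']⟩ h

theorem Submodule.nonempty_quotient_comap_subtype_equiv {W N K : Submodule R M} (hK : K ≤ W)
    (hNK : Disjoint N K) (hW : W ≤ N ⊔ K) : Nonempty ((W ⧸ N.comap W.subtype) ≃ₗ[R] K) := by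
  refine ⟨(Submodule.quotientEquivOfIsCompl _ (K.comap W.subtype) ⟨?_, ?_⟩).trans
    (Submodule.comapSubtypeEquivOfLe hK)⟩
  · rw [Submodule.disjoint_def]
    exact fun x hxN hxK ↦ Subtype.ext (Submodule.disjoint_def.mp hNK _ hxN hxK)
  · rw [codisjoint_iff, eq_top_iff]
    rintro ⟨x, hx⟩ -
    obtain ⟨n, hn, k, hk, rfl⟩ := Submodule.mem_sup.mp (hW hx)
    have hnW : n ∈ W := by simpa using W.sub_mem hx (hK hk)
    exact Submodule.mem_sup.mpr ⟨⟨n, hnW⟩, hn, ⟨k, hK hk⟩, hk, rfl⟩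

end Ring

theorem Module.End.maxGenEigenspace_pow_zero_eq_ker {R M : Type*} [CommRing R] [AddCommGroup M]
    [Module R M] {f : Module.End R M} (hf : Disjoint (range f) (ker f)) {n : ℕ} (hn : n ≠ 0) :
    (f ^ n).maxGenEigenspace 0 = ker f := by
  ext x
  rw [Module.End.mem_maxGenEigenspace]
  simp only [zero_smul, sub_zero, ← pow_mul]
  refine ⟨fun ⟨k, hk⟩ ↦ ?_, fun h ↦ ⟨1, ?_⟩⟩
  · rcases eq_or_ne k 0 with rfl | hk0
    · rw [mul_zero, pow_zero, Module.End.one_apply] at hk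
      rw [hk]; exact zero_mem _
    · rw [← LinearMap.ker_pow_eq_ker hf (mul_ne_zero hn hk0)]; exact hk
  · rw [mul_one, ← LinearMap.mem_ker, LinearMap.ker_pow_eq_ker hf hn]; exact h

section InnerProduct

variable {𝕜 E F : Type*} [RCLike 𝕜] [NormedAddCommGroup E] [InnerProductSpace 𝕜 E]
  [NormedAddCommGroup F] [InnerProductSpace 𝕜 F]

theorem LinearMap.disjoint_range_ker_of_inner_eq_neg {S : E →ₗ[𝕜] F} {T : F →ₗ[𝕜] E}
    (h : ∀ x y, inner 𝕜 (S x) y = -inner 𝕜 x (T y)) : Disjoint (range S) (ker T) := by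
  rw [Submodule.disjoint_def]
  rintro _ ⟨x, rfl⟩ hx
  rw [← inner_self_eq_zero (𝕜 := 𝕜), h, LinearMap.mem_ker.mp hx, inner_zero_right, neg_zero]

theorem LinearMap.inner_eq_neg_symm {S : E →ₗ[𝕜] F} {T : F →ₗ[𝕜] E}
    (h : ∀ x y, inner 𝕜 (S x) y = -inner 𝕜 x (T y)) (x : F) (y : E) :
    inner 𝕜 (T x) y = -inner 𝕜 x (S y) := by
  rw [← inner_conj_symm, ← inner_conj_symm x, h, map_neg, neg_neg]

theorem LinearMap.inner_add_apply_eq_neg {S T : E →ₗ[𝕜] E}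
    (h : ∀ x y, inner 𝕜 (S x) y = -inner 𝕜 x (T y)) (x y : E) :
    inner 𝕜 ((S + T) x) y = -inner 𝕜 x ((S + T) y) := by
  rw [add_apply, add_apply, inner_add_left, inner_add_right, h, inner_eq_neg_symm h, neg_add,
    add_comm]

theorem LinearMap.nonempty_quotient_range_equiv_ker_add {S T : Module.End 𝕜 E} (hS : S * S = 0)
    (hT : T * T = 0) (h : ∀ x y, inner 𝕜 (S x) y = -inner 𝕜 x (T y))
    (htop : ⨆ μ, ((S + T) ^ 2).maxGenEigenspace μ = ⊤) :
    Nonempty ((ker S ⧸ (range S).comap (ker S).subtype) ≃ₗ[𝕜] ker (S + T)) := by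
  have hsq : (S + T) ^ 2 = S * T + T * S := by
    rw [sq, add_mul, mul_add, mul_add, hS, hT, zero_add, add_zero]
  have hkerS : ker (S + T) ≤ ker S := ker_add_le_ker_left (disjoint_range_ker_of_inner_eq_neg h) hT
  have hkerT : ker (S + T) ≤ ker T := add_comm T S ▸
    ker_add_le_ker_left (disjoint_range_ker_of_inner_eq_neg (inner_eq_neg_symm h)) hS
  refine Submodule.nonempty_quotient_comap_subtype_equiv hkerS
    ((disjoint_range_ker_of_inner_eq_neg h).mono_right hkerT) ?_
  rw [← Module.End.maxGenEigenspace_pow_zero_eq_ker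
    (disjoint_range_ker_of_inner_eq_neg (inner_add_apply_eq_neg h)) two_ne_zero, hsq]
  exact ker_le_range_sup_maxGenEigenspace_zero hS (hsq ▸ htop)

end InnerProduct

theorem stmt15_general {T : Type*} [NormedAddCommGroup T] [InnerProductSpace ℂ T]
    (Cp Cm : Module.End ℂ T)          -- C⁺ = d and C⁻ = ∂
    (hp2 : Cp * Cp = 0) (hm2 : Cm * Cm = 0)
    (hadj : ∀ x y : T, (inner ℂ (Cp x) y : ℂ) = - inner ℂ x (Cm y))
    (D : Module.End ℂ T) (hD : D = Cp + Cm)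
    (hdecomp : ⨆ c : ℂ, (D ^ 2).maxGenEigenspace c = ⊤) :
    Nonempty ((LinearMap.ker D ⧸
        ((LinearMap.range D ⊓ LinearMap.ker D).comap (LinearMap.ker D).subtype))
      ≃ₗ[ℂ] LinearMap.ker D) ∧
    Nonempty ((LinearMap.ker Cp ⧸
        ((LinearMap.range Cp).comap (LinearMap.ker Cp).subtype))
      ≃ₗ[ℂ] LinearMap.ker D) ∧
    Nonempty ((LinearMap.ker Cm ⧸
        ((LinearMap.range Cm).comap (LinearMap.ker Cm).subtype))
      ≃ₗ[ℂ] LinearMap.ker D) := by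
  subst hD
  have hadj' := LinearMap.inner_eq_neg_symm hadj
  refine ⟨Submodule.nonempty_quotient_comap_subtype_equiv le_rfl ?_ le_sup_right,
    LinearMap.nonempty_quotient_range_equiv_ker_add hp2 hm2 hadj hdecomp,
    add_comm Cm Cp ▸ LinearMap.nonempty_quotient_range_equiv_ker_add hm2 hp2 hadj'
      (add_comm Cp Cm ▸ hdecomp)⟩
  exact (LinearMap.disjoint_range_ker_of_inner_eq_neg
    (LinearMap.inner_add_apply_eq_neg hadj)).mono_left inf_le_left

/-- Let `(g,k)` be a Hermitian symmetric pair and `M` a unitary module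
in `O`.  Under the identification `M ⊗ S ≅ Hom(⋀p⁺, M) ⊗ ℂ_{ρ−ρ_k}`, the Dirac
operator is `D = C⁺ + C⁻` where `C⁺ = d` is the Chevalley–Eilenberg differential
computing `H^•(p⁺, M)` and `C⁻ = ∂` is the Lie homology differential computing
`H_•(p⁻, M)`; they are square-zero, adjoint to each other up to sign (unitarity), and
`M ⊗ S` is an orthogonal sum of finite-dimensional generalized eigenspaces of `D²`
(since `M ∈ O`).  Then
`H_D(M) = ker D/(im D ∩ ker D) ≅ ker D ≅ ker C⁺/im C⁺ ≅ ker C⁻/im C⁻`, i.e. the Dirac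
cohomology coincides with `H^•(p⁺,M) ⊗ ℂ_{ρ−ρ_k}` and with `H_•(p⁻,M) ⊗ ℂ_{ρ−ρ_k}`. -/
theorem stmt15 {T : Type*} [NormedAddCommGroup T] [InnerProductSpace ℂ T]
    (Cp Cm : Module.End ℂ T)          -- C⁺ = d and C⁻ = ∂
    (hp2 : Cp * Cp = 0) (hm2 : Cm * Cm = 0)
    (hadj : ∀ x y : T, (inner ℂ (Cp x) y : ℂ) = - inner ℂ x (Cm y))
    (D : Module.End ℂ T) (hD : D = Cp + Cm)
    (hdecomp : ⨆ c : ℂ, (D ^ 2).maxGenEigenspace c = ⊤)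
    (hfin : ∀ c : ℂ, FiniteDimensional ℂ ((D ^ 2).maxGenEigenspace c)) :
    Nonempty ((LinearMap.ker D ⧸
        ((LinearMap.range D ⊓ LinearMap.ker D).comap (LinearMap.ker D).subtype))
      ≃ₗ[ℂ] LinearMap.ker D) ∧
    Nonempty ((LinearMap.ker Cp ⧸
        ((LinearMap.range Cp).comap (LinearMap.ker Cp).subtype))
      ≃ₗ[ℂ] LinearMap.ker D) ∧
    Nonempty ((LinearMap.ker Cm ⧸
        ((LinearMap.range Cm).comap (LinearMap.ker Cm).subtype))
      ≃ₗ[ℂ] LinearMap.ker D) :=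
  stmt15_general Cp Cm hp2 hm2 hadj D hD hdecomp
end

section
/- Unitary Hodge decomposition for the half-operators: let (g,k) be Hermitian symmetric and M ∈ O unitary. Then ker C⁺ = im C⁺ ⊕ ker D and ker C⁻ = im C⁻ ⊕ ker D, where D = C⁺ + C⁻, and both direct sums are orthogonal. Abstractly: if C⁺, C⁻ are operators on an inner product space with (C⁺)² = (C⁻)² = 0, (C^±)^adj = −C^∓, and V = ker D ⊕ im D for D = C⁺ + C⁻, then ker C⁺ = im C⁺ ⊕ ker D orthogonally. -/
/-!
For `y ∈ ker D` we have `C⁺ y = -C⁻ y`, so `‖C⁺ y‖² = -⟪y, C⁻ C⁺ y⟫ = ⟪y, (C⁻)² y⟫ = 0`; thus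
`ker D ⊆ ker C⁺ ∩ ker C⁻`, and `im C⁺ ⟂ ker D` because `⟪C⁺ z, y⟫ = -⟪z, C⁻ y⟫ = 0`.
If `C⁺ x = 0`, write `x = a + D z` with `a ∈ ker D`; then `C⁺ C⁻ z = C⁺ x = 0`, and
`x = C⁺ z + (a + C⁻ z)` with `a + C⁻ z ∈ ker D`.
-/

namespace Module.End

variable {V : Type*} [NormedAddCommGroup V] [InnerProductSpace ℂ V] {A B : Module.End ℂ V}

lemma inner_apply_eq_neg_inner_apply_symm (hadj : ∀ x y : V, inner ℂ (A x) y = -inner ℂ x (B y))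
    (x y : V) : inner ℂ (B x) y = -inner ℂ x (A y) := by
  rw [← inner_conj_symm (B x), ← inner_conj_symm x, hadj, map_neg, neg_neg]

lemma apply_apply_eq_zero (hA : A * A = 0) (x : V) : A (A x) = 0 :=
  LinearMap.congr_fun hA x

lemma ker_add_le_ker_left (hB : B * B = 0)
    (hadj : ∀ x y : V, inner ℂ (A x) y = -inner ℂ x (B y)) :
    LinearMap.ker (A + B) ≤ LinearMap.ker A := by
  intro y hy
  have hAy : A y = -B y := eq_neg_of_add_eq_zero_left hy
  have hBAy : B (A y) = 0 := by rw [hAy, map_neg, apply_apply_eq_zero hB, neg_zero]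
  exact inner_self_eq_zero.mp (by rw [hadj, hBAy, inner_zero_right, neg_zero])

lemma ker_add_le_ker_right (hA : A * A = 0)
    (hadj : ∀ x y : V, inner ℂ (A x) y = -inner ℂ x (B y)) :
    LinearMap.ker (A + B) ≤ LinearMap.ker B :=
  add_comm A B ▸ ker_add_le_ker_left hA (inner_apply_eq_neg_inner_apply_symm hadj)

lemma inner_eq_zero_of_mem_range_of_mem_ker
    (hadj : ∀ x y : V, inner ℂ (A x) y = -inner ℂ x (B y))
    {x y : V} (hx : x ∈ LinearMap.range A) (hy : y ∈ LinearMap.ker B) : inner ℂ x y = 0 := by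
  obtain ⟨z, rfl⟩ := hx
  rw [hadj, LinearMap.mem_ker.mp hy, inner_zero_right, neg_zero]

lemma ker_le_range_sup_ker_add (hA : A * A = 0) (hB : B * B = 0)
    (hkerD : LinearMap.ker (A + B) ≤ LinearMap.ker A)
    (hcod : Codisjoint (LinearMap.ker (A + B)) (LinearMap.range (A + B))) :
    LinearMap.ker A ≤ LinearMap.range A ⊔ LinearMap.ker (A + B) := by
  intro x hx
  obtain ⟨a, _, ha, ⟨z, rfl⟩, rfl⟩ := Submodule.codisjoint_iff_exists_add_eq.mp hcod x
  have hABz : A (B z) = 0 := by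
    simpa [LinearMap.mem_ker.mp (hkerD ha), apply_apply_eq_zero hA] using LinearMap.mem_ker.mp hx
  have hmem : a + B z ∈ LinearMap.ker (A + B) := by
    simpa [hABz, apply_apply_eq_zero hB] using ha
  have hsplit : a + (A + B) z = A z + (a + B z) := by
    rw [LinearMap.add_apply]; abel
  exact hsplit ▸ Submodule.add_mem_sup (LinearMap.mem_range_self A z) hmem

lemma ker_eq_range_sup_ker_add_orthogonal (hA : A * A = 0) (hB : B * B = 0)
    (hadj : ∀ x y : V, inner ℂ (A x) y = -inner ℂ x (B y))
    (hcod : Codisjoint (LinearMap.ker (A + B)) (LinearMap.range (A + B))) :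
    LinearMap.ker A = LinearMap.range A ⊔ LinearMap.ker (A + B) ∧
      Disjoint (LinearMap.range A) (LinearMap.ker (A + B)) ∧
      ∀ x ∈ LinearMap.range A, ∀ y ∈ LinearMap.ker (A + B), inner ℂ x y = 0 := by
  have hkerD := ker_add_le_ker_left hB hadj
  have horth : ∀ x ∈ LinearMap.range A, ∀ y ∈ LinearMap.ker (A + B), inner ℂ x y = 0 :=
    fun x hx y hy ↦
      inner_eq_zero_of_mem_range_of_mem_ker hadj hx (ker_add_le_ker_right hA hadj hy)
  refine ⟨le_antisymm (ker_le_range_sup_ker_add hA hB hkerD hcod) ?_, ?_, horth⟩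
  · exact sup_le (fun _ ⟨z, hz⟩ ↦ hz ▸ apply_apply_eq_zero hA z) hkerD
  · exact Submodule.disjoint_def.mpr fun x hx hy ↦ inner_self_eq_zero.mp (horth x hx x hy)

end Module.End

theorem stmt17_general {V : Type*} [NormedAddCommGroup V] [InnerProductSpace ℂ V]
    (Cp Cm : Module.End ℂ V)
    (hp2 : Cp * Cp = 0) (hm2 : Cm * Cm = 0)
    (hadjp : ∀ x y : V, (inner ℂ (Cp x) y : ℂ) = - inner ℂ x (Cm y))
    (hcompl : IsCompl (LinearMap.ker (Cp + Cm)) (LinearMap.range (Cp + Cm))) :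
    (LinearMap.ker Cp = LinearMap.range Cp ⊔ LinearMap.ker (Cp + Cm) ∧
     Disjoint (LinearMap.range Cp) (LinearMap.ker (Cp + Cm)) ∧
     ∀ x ∈ LinearMap.range Cp, ∀ y ∈ LinearMap.ker (Cp + Cm),
       (inner ℂ x y : ℂ) = 0) ∧
    (LinearMap.ker Cm = LinearMap.range Cm ⊔ LinearMap.ker (Cp + Cm) ∧
     Disjoint (LinearMap.range Cm) (LinearMap.ker (Cp + Cm)) ∧
     ∀ x ∈ LinearMap.range Cm, ∀ y ∈ LinearMap.ker (Cp + Cm),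
       (inner ℂ x y : ℂ) = 0) := by
  refine ⟨Module.End.ker_eq_range_sup_ker_add_orthogonal hp2 hm2 hadjp hcompl.codisjoint, ?_⟩
  rw [add_comm Cp Cm] at hcompl ⊢
  exact Module.End.ker_eq_range_sup_ker_add_orthogonal hm2 hp2
    (Module.End.inner_apply_eq_neg_inner_apply_symm hadjp) hcompl.codisjoint

/-- unitary Hodge decomposition for the half-operators: let `C⁺, C⁻` be
operators on a complex inner product space `V` with `(C⁺)² = (C⁻)² = 0`,
`(C^±)^adj = −C^∓`, and suppose `V = ker D ⊕ im D` for `D = C⁺ + C⁻`.  Then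
`ker C⁺ = im C⁺ ⊕ ker D` and `ker C⁻ = im C⁻ ⊕ ker D`, both direct sums orthogonal. -/
theorem stmt17 {V : Type*} [NormedAddCommGroup V] [InnerProductSpace ℂ V]
    (Cp Cm : Module.End ℂ V)
    (hp2 : Cp * Cp = 0) (hm2 : Cm * Cm = 0)
    (hadjp : ∀ x y : V, (inner ℂ (Cp x) y : ℂ) = - inner ℂ x (Cm y))
    (hadjm : ∀ x y : V, (inner ℂ (Cm x) y : ℂ) = - inner ℂ x (Cp y))
    (hcompl : IsCompl (LinearMap.ker (Cp + Cm)) (LinearMap.range (Cp + Cm))) :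
    (LinearMap.ker Cp = LinearMap.range Cp ⊔ LinearMap.ker (Cp + Cm) ∧
     Disjoint (LinearMap.range Cp) (LinearMap.ker (Cp + Cm)) ∧
     ∀ x ∈ LinearMap.range Cp, ∀ y ∈ LinearMap.ker (Cp + Cm),
       (inner ℂ x y : ℂ) = 0) ∧
    (LinearMap.ker Cm = LinearMap.range Cm ⊔ LinearMap.ker (Cp + Cm) ∧
     Disjoint (LinearMap.range Cm) (LinearMap.ker (Cp + Cm)) ∧
     ∀ x ∈ LinearMap.range Cm, ∀ y ∈ LinearMap.ker (Cp + Cm),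
       (inner ℂ x y : ℂ) = 0) :=
  stmt17_general Cp Cm hp2 hm2 hadjp hcompl
end

section
/- Higher Dirac index theorem for O: let M ∈ O. Then in the Grothendieck group of weight modules, I_top(M) = [M ⊗ S⁺] − [M ⊗ S⁻], where I_top(M) = H_top(M)⁺ − H_top(M)⁻ is the higher Dirac index. Equivalently, for every weight μ: dim H_top(M)⁺_μ − dim H_top(M)⁻_μ = dim (M ⊗ S⁺)_μ − dim (M ⊗ S⁻)_μ. -/
/-!
Let `E` be an odd endomorphism of a finite-dimensional super vector space `W = P ⊕ Q`, let `sdim`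
be the superdimension of a graded subspace and `g n = sdim (ker E^n)`. Since
`ker E^m ⊓ im E = E (ker E^(m+1))` and an odd map satisfies
`sdim (E X) = sdim (ker E ⊓ X) - sdim X`, the superdimension of
`ker E^(n+1) / (ker E^(n+1) ⊓ im E + ker E^n)` is `g (n+2) - g n`. Summing over even `n`
telescopes to `g N` for large `N`, which is `sdim W` by Fitting's decomposition
`W = ker E^N ⊕ im E^N`: `E` is an odd automorphism of `im E^N`, whose superdimension therefore
vanishes. The theorem is the case of the restriction of `D` to `wt μ`: this weight space has the
`D`-stable complement `⨆ ν ≠ μ, wt ν`, so kernels and images of `D` meet `wt μ` in those of the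
restriction.
-/

open Module LinearMap Submodule

theorem sup_inf_eq_of_le_of_disjoint {α : Type*} [Lattice α] [OrderBot α] [IsModularLattice α]
    {a b p q : α} (ha : a ≤ p) (hb : b ≤ q) (hpq : Disjoint p q) : (a ⊔ b) ⊓ p = a := by
  rw [sup_inf_assoc_of_le b ha, (hpq.symm.mono_left hb).eq_bot, sup_bot_eq]

theorem LinearMap.ker_pow_inf_range {R M : Type*} [Semiring R] [AddCommMonoid M] [Module R M]
    (f : Module.End R M) (n : ℕ) : ker (f ^ n) ⊓ range f = (ker (f ^ (n + 1))).map f := by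
  rw [pow_succ, Module.End.mul_eq_comp, ker_comp, map_comap_eq, inf_comm]

theorem LinearMap.ker_pow_le_ker_pow {R M : Type*} [Semiring R] [AddCommMonoid M] [Module R M]
    {f : Module.End R M} {m n : ℕ} (h : m ≤ n) : ker (f ^ m) ≤ ker (f ^ n) :=
  f.iterateKer.monotone h

theorem finsum_sub_eq_of_eventually_eq {G : Type*} [AddCommGroup G] {f : ℕ → G} {c : G}
    (hf : ∀ᶠ n in Filter.atTop, f n = c) : ∑ᶠ k, (f (k + 1) - f k) = c - f 0 := by
  obtain ⟨N, hN⟩ := Filter.eventually_atTop.mp hf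
  have hsupp : (Function.support fun k => f (k + 1) - f k) ⊆ Finset.range N := by
    intro k hk
    by_contra hkN
    simp only [Finset.coe_range, Set.mem_Iio, not_lt] at hkN
    exact hk (show f (k + 1) - f k = 0 by rw [hN k hkN, hN (k + 1) (by omega), sub_self])
  rw [finsum_eq_sum_of_support_subset _ hsupp, Finset.sum_range_sub, hN N le_rfl]

namespace Submodule

section IsGraded

variable {R M M₂ : Type*} [Ring R] [AddCommGroup M] [Module R M] [AddCommGroup M₂]
  [Module R M₂] {P Q X Y : Submodule R M} {P' Q' Z : Submodule R M₂} {f : M →ₗ[R] M₂}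

def IsGraded (P Q X : Submodule R M) : Prop := X = X ⊓ P ⊔ X ⊓ Q

theorem IsGraded.of_le (h : X ≤ X ⊓ P ⊔ X ⊓ Q) : IsGraded P Q X :=
  le_antisymm h (sup_le inf_le_left inf_le_left)

theorem IsGraded.symm (hX : IsGraded P Q X) : IsGraded Q P X := hX.trans (sup_comm _ _)

theorem isGraded_bot : IsGraded P Q ⊥ := by simp [IsGraded]

theorem isGraded_top (hPQ : Codisjoint P Q) : IsGraded P Q ⊤ := by
  simp [IsGraded, hPQ.eq_top]

theorem IsGraded.sup_inf_left (hPQ : Disjoint P Q) (hX : IsGraded P Q X) (hY : IsGraded P Q Y) :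
    (X ⊔ Y) ⊓ P = X ⊓ P ⊔ Y ⊓ P := by
  have hXY : X ⊔ Y = (X ⊓ P ⊔ Y ⊓ P) ⊔ (X ⊓ Q ⊔ Y ⊓ Q) := by
    rw [sup_sup_sup_comm, ← hX, ← hY]
  rw [hXY]
  exact sup_inf_eq_of_le_of_disjoint (sup_le inf_le_right inf_le_right)
    (sup_le inf_le_right inf_le_right) hPQ

theorem IsGraded.map (hP : P.map f ≤ P') (hQ : Q.map f ≤ Q') (hX : IsGraded P Q X) :
    IsGraded P' Q' (X.map f) := by
  refine .of_le ?_
  conv_lhs => rw [hX, Submodule.map_sup]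
  exact sup_le_sup (le_inf (map_mono inf_le_left) ((map_mono inf_le_right).trans hP))
    (le_inf (map_mono inf_le_left) ((map_mono inf_le_right).trans hQ))

theorem IsGraded.map_inf_left (hPQ' : Disjoint P' Q') (hP : P.map f ≤ P') (hQ : Q.map f ≤ Q')
    (hX : IsGraded P Q X) : X.map f ⊓ P' = (X ⊓ P).map f := by
  conv_lhs => rw [hX, Submodule.map_sup]
  exact sup_inf_eq_of_le_of_disjoint ((map_mono inf_le_right).trans hP)
    ((map_mono inf_le_right).trans hQ) hPQ'

theorem IsGraded.comap (hPQ : Codisjoint P Q) (hPQ' : Disjoint P' Q') (hP : P.map f ≤ P')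
    (hQ : Q.map f ≤ Q') (hZ : IsGraded P' Q' Z) : IsGraded P Q (Z.comap f) := by
  refine .of_le fun x hx => ?_
  obtain ⟨p, hp, q, hq, rfl⟩ := mem_sup.mp (hPQ.eq_top ▸ mem_top : x ∈ P ⊔ Q)
  obtain ⟨a, ha, b, hb, hab⟩ := mem_sup.mp (hZ ▸ hx : f (p + q) ∈ Z ⊓ P' ⊔ Z ⊓ Q')
  -- `f p - a = b - f q` lies in `P' ⊓ Q' = ⊥`
  have hfp : f p = a := by
    refine (sub_eq_zero.mp (disjoint_def.mp hPQ' _ (sub_mem (hP (mem_map_of_mem hp)) ha.2) ?_))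
    rw [show f p - a = b - f q by rw [sub_eq_sub_iff_add_eq_add, ← map_add, ← hab, add_comm]]
    exact sub_mem hb.2 (hQ (mem_map_of_mem hq))
  have hfq : f q = b := by rwa [map_add, hfp, add_right_inj, eq_comm] at hab
  exact add_mem_sup ⟨mem_comap.mpr (hfp ▸ ha.1), hp⟩ ⟨mem_comap.mpr (hfq ▸ hb.1), hq⟩

theorem isGraded_ker_pow {f : Module.End R M}
    (hf : ∀ X, IsGraded P Q X → IsGraded P Q (X.comap f)) (n : ℕ) :
    IsGraded P Q (ker (f ^ n)) := by
  induction n with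
  | zero => rw [pow_zero, Module.End.one_eq_id, ker_id]; exact isGraded_bot
  | succ n ih => rw [pow_succ, Module.End.mul_eq_comp, ker_comp]; exact hf _ ih

theorem isGraded_range_pow {f : Module.End R M} (hPQ : Codisjoint P Q)
    (hf : ∀ X, IsGraded P Q X → IsGraded P Q (X.map f)) (n : ℕ) :
    IsGraded P Q (range (f ^ n)) := by
  induction n with
  | zero => rw [pow_zero, Module.End.one_eq_id, range_id]; exact isGraded_top hPQ
  | succ n ih => rw [pow_succ', Module.End.mul_eq_comp, range_comp]; exact hf _ ih

end IsGraded

section superFinrank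

variable {K W V₂ : Type*} [DivisionRing K] [AddCommGroup W] [Module K W] [AddCommGroup V₂]
  [Module K V₂] {P Q X Y : Submodule K W} {E : Module.End K W}

theorem finrank_comap_subtype (N X : Submodule K W) :
    finrank K (X.comap N.subtype) = finrank K ↥(N ⊓ X) := by
  rw [← finrank_map_subtype_eq, map_comap_subtype]

theorem finrank_map_add_finrank_ker_inf (f : W →ₗ[K] V₂) (X : Submodule K W)
    [FiniteDimensional K X] : finrank K (X.map f) + finrank K ↥(ker f ⊓ X) = finrank K X := by
  have h := finrank_range_add_finrank_ker (f.domRestrict X)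
  rwa [range_domRestrict, ker_domRestrict, finrank_comap_subtype, inf_comm] at h

theorem finrank_le_of_map_le_of_disjoint_ker {f : W →ₗ[K] V₂} {X : Submodule K W}
    {Y : Submodule K V₂} [FiniteDimensional K X] [FiniteDimensional K Y] (hXY : X.map f ≤ Y)
    (hf : Disjoint (ker f) X) : finrank K X ≤ finrank K Y := by
  rw [← finrank_map_add_finrank_ker_inf f X, hf.eq_bot, finrank_bot, add_zero]
  exact finrank_mono hXY

noncomputable def superFinrank (P Q X : Submodule K W) : ℤ :=
  finrank K ↥(X ⊓ P) - finrank K ↥(X ⊓ Q)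

theorem superFinrank_bot : superFinrank P Q ⊥ = 0 := by
  rw [superFinrank, bot_inf_eq, bot_inf_eq, finrank_bot, sub_self]

theorem superFinrank_top : superFinrank P Q ⊤ = finrank K P - finrank K Q := by
  rw [superFinrank, top_inf_eq, top_inf_eq]

theorem superFinrank_comap_subtype (N P Q X : Submodule K W) :
    superFinrank (P.comap N.subtype) (Q.comap N.subtype) (X.comap N.subtype)
      = finrank K ↥(X ⊓ N ⊓ P) - finrank K ↥(X ⊓ N ⊓ Q) := by
  rw [superFinrank, ← comap_inf, ← comap_inf, finrank_comap_subtype, finrank_comap_subtype,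
    inf_comm X N, inf_assoc, inf_assoc]

variable [FiniteDimensional K W]

theorem IsGraded.finrank_sup_inf_add_finrank_inf_inf (hPQ : Disjoint P Q) (hX : IsGraded P Q X)
    (hY : IsGraded P Q Y) :
    finrank K ↥((X ⊔ Y) ⊓ P) + finrank K ↥(X ⊓ Y ⊓ P)
      = finrank K ↥(X ⊓ P) + finrank K ↥(Y ⊓ P) := by
  rw [hX.sup_inf_left hPQ hY, ← inf_idem P, ← inf_inf_inf_comm, inf_idem]
  exact finrank_sup_add_finrank_inf_eq _ _

theorem IsGraded.superFinrank_sup_add_inf (hPQ : Disjoint P Q) (hX : IsGraded P Q X)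
    (hY : IsGraded P Q Y) :
    superFinrank P Q (X ⊔ Y) + superFinrank P Q (X ⊓ Y)
      = superFinrank P Q X + superFinrank P Q Y := by
  have hP := hX.finrank_sup_inf_add_finrank_inf_inf hPQ hY
  have hQ := hX.symm.finrank_sup_inf_add_finrank_inf_inf hPQ.symm hY.symm
  simp only [superFinrank]
  omega

theorem IsGraded.superFinrank_map_of_odd (hPQ : Disjoint P Q) (hEP : P.map E ≤ Q)
    (hEQ : Q.map E ≤ P) (hX : IsGraded P Q X) :
    superFinrank P Q (X.map E) = superFinrank P Q (ker E ⊓ X) - superFinrank P Q X := by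
  have hP := hX.symm.map_inf_left hPQ hEQ hEP
  have hQ := hX.map_inf_left hPQ.symm hEP hEQ
  have rnP := finrank_map_add_finrank_ker_inf E (X ⊓ P)
  have rnQ := finrank_map_add_finrank_ker_inf E (X ⊓ Q)
  rw [superFinrank, superFinrank, superFinrank, hP, hQ, inf_assoc, inf_assoc]
  omega

theorem superFinrank_eq_zero_of_odd (hEP : P.map E ≤ Q) (hEQ : Q.map E ≤ P) (hX : X.map E ≤ X)
    (hE : Disjoint (ker E) X) : superFinrank P Q X = 0 := by
  have hPQ : finrank K ↥(X ⊓ P) ≤ finrank K ↥(X ⊓ Q) :=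
    finrank_le_of_map_le_of_disjoint_ker
      (le_inf ((map_mono inf_le_left).trans hX) ((map_mono inf_le_right).trans hEP))
      (hE.mono_right inf_le_left)
  have hQP : finrank K ↥(X ⊓ Q) ≤ finrank K ↥(X ⊓ P) :=
    finrank_le_of_map_le_of_disjoint_ker
      (le_inf ((map_mono inf_le_left).trans hX) ((map_mono inf_le_right).trans hEQ))
      (hE.mono_right inf_le_left)
  simp only [superFinrank]
  omega

end superFinrank

section Odd

variable {K W : Type*} [DivisionRing K] [AddCommGroup W] [Module K W] {P Q : Submodule K W}
  {E : Module.End K W}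

theorem isGraded_ker_pow_of_odd (hPQ : IsCompl P Q) (hEP : P.map E ≤ Q) (hEQ : Q.map E ≤ P)
    (n : ℕ) : IsGraded P Q (ker (E ^ n)) :=
  isGraded_ker_pow (fun _ hZ => hZ.symm.comap hPQ.codisjoint hPQ.disjoint.symm hEP hEQ) n

theorem isGraded_range_pow_of_odd (hPQ : IsCompl P Q) (hEP : P.map E ≤ Q) (hEQ : Q.map E ≤ P)
    (n : ℕ) : IsGraded P Q (range (E ^ n)) :=
  isGraded_range_pow hPQ.codisjoint (fun _ hZ => (hZ.map hEP hEQ).symm) n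

variable [FiniteDimensional K W]

theorem superFinrank_ker_pow_sub (hPQ : IsCompl P Q) (hEP : P.map E ≤ Q) (hEQ : Q.map E ≤ P)
    (n : ℕ) :
    superFinrank P Q (ker (E ^ (n + 1)))
        - superFinrank P Q (ker (E ^ (n + 1)) ⊓ range E ⊔ ker (E ^ n))
      = superFinrank P Q (ker (E ^ (n + 2))) - superFinrank P Q (ker (E ^ n)) := by
  have hker := isGraded_ker_pow_of_odd hPQ hEP hEQ
  have hmap (m : ℕ) : superFinrank P Q ((ker (E ^ (m + 1))).map E)
      = superFinrank P Q (ker E) - superFinrank P Q (ker (E ^ (m + 1))) := by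
    rw [(hker (m + 1)).superFinrank_map_of_odd hPQ.disjoint hEP hEQ, inf_eq_left.mpr]
    simpa using ker_pow_le_ker_pow (f := E) (Nat.le_add_left 1 m)
  have hAB : (ker (E ^ (n + 2))).map E ⊓ ker (E ^ n) = (ker (E ^ (n + 1))).map E := by
    rw [← ker_pow_inf_range, inf_right_comm, inf_eq_right.mpr (ker_pow_le_ker_pow n.le_succ),
      ker_pow_inf_range]
  have h := (((hker (n + 2)).map hEP hEQ).symm).superFinrank_sup_add_inf hPQ.disjoint (hker n)
  rw [hAB, hmap, hmap] at h
  rw [ker_pow_inf_range]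
  linarith

theorem eventually_superFinrank_ker_pow_eq_top (hPQ : IsCompl P Q) (hEP : P.map E ≤ Q)
    (hEQ : Q.map E ≤ P) :
    ∀ᶠ n in Filter.atTop, superFinrank P Q (ker (E ^ n)) = superFinrank P Q ⊤ := by
  filter_upwards [E.eventually_isCompl_ker_pow_range_pow, Filter.eventually_ge_atTop 1]
    with n hc hn
  have hR : superFinrank P Q (range (E ^ n)) = 0 := by
    refine superFinrank_eq_zero_of_odd hEP hEQ ?_ (hc.disjoint.mono_left ?_)
    · rw [← range_comp, ← Module.End.mul_eq_comp, ← pow_succ', pow_succ, Module.End.mul_eq_comp]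
      exact range_comp_le_range _ _
    · simpa using ker_pow_le_ker_pow (f := E) hn
  have h := (isGraded_ker_pow_of_odd hPQ hEP hEQ n).superFinrank_sup_add_inf hPQ.disjoint
    (isGraded_range_pow_of_odd hPQ hEP hEQ n)
  rw [hc.sup_eq_top, hc.inf_eq_bot, superFinrank_bot, hR] at h
  linarith

theorem finsum_superFinrank_eq_of_odd (hPQ : IsCompl P Q) (hEP : P.map E ≤ Q)
    (hEQ : Q.map E ≤ P) :
    ∑ᶠ k : ℕ, (superFinrank P Q (ker (E ^ (2 * k + 1)))
        - superFinrank P Q (ker (E ^ (2 * k + 1)) ⊓ range E ⊔ ker (E ^ (2 * k))))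
      = finrank K P - finrank K Q := by
  obtain ⟨N, hN⟩ :=
    Filter.eventually_atTop.mp (eventually_superFinrank_ker_pow_eq_top hPQ hEP hEQ)
  have h := finsum_sub_eq_of_eventually_eq (f := fun k => superFinrank P Q (ker (E ^ (2 * k))))
    (Filter.eventually_atTop.mpr ⟨N, fun k hk => hN (2 * k) (by omega)⟩)
  simp only [mul_add_one, mul_zero, pow_zero, Module.End.one_eq_id, ker_id, superFinrank_bot,
    sub_zero] at h
  simp only [superFinrank_ker_pow_sub hPQ hEP hEQ, h, superFinrank_top]

end Odd

section Restrict

variable {R M : Type*} [Ring R] [AddCommGroup M] [Module R M] {P Q N U : Submodule R M}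
  {f : Module.End R M}

theorem IsGraded.isCompl_comap_subtype (hPQ : Disjoint P Q) (hN : IsGraded P Q N) :
    IsCompl (P.comap N.subtype) (Q.comap N.subtype) := by
  constructor
  · rw [disjoint_iff, ← comap_inf, hPQ.eq_bot, comap_bot, ker_subtype]
  · rw [codisjoint_iff]
    apply map_injective_of_injective N.injective_subtype
    rw [map_sup, map_comap_subtype, map_comap_subtype, map_top, range_subtype, ← hN]

theorem IsGraded.comap_subtype_sup (hNU : Disjoint N U) {X Y : Submodule R M}
    (hX : IsGraded N U X) (hY : IsGraded N U Y) :
    (X ⊔ Y).comap N.subtype = X.comap N.subtype ⊔ Y.comap N.subtype := by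
  apply map_injective_of_injective N.injective_subtype
  rw [map_sup, map_comap_subtype, map_comap_subtype, map_comap_subtype, inf_comm,
    hX.sup_inf_left hNU hY, inf_comm X, inf_comm Y]

theorem comap_subtype_ker_pow (hfN : N.map f ≤ N) (n : ℕ) :
    (ker (f ^ n)).comap N.subtype = ker (f.restrict (map_le_iff_le_comap.mp hfN) ^ n) := by
  rw [Module.End.pow_restrict, ker_restrict]

theorem comap_subtype_range (hNU : IsCompl N U) (hfN : N.map f ≤ N) (hfU : U.map f ≤ U) :
    (range f).comap N.subtype = range (f.restrict (map_le_iff_le_comap.mp hfN)) := by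
  have h := (isGraded_top hNU.codisjoint).map_inf_left hNU.disjoint hfN hfU
  rw [top_inf_eq, map_top] at h
  rw [range_restrict, ← h, comap_inf, comap_subtype_self, inf_top_eq]

theorem comap_subtype_ker_pow_inf_range_sup (hNU : IsCompl N U) (hfN : N.map f ≤ N)
    (hfU : U.map f ≤ U) (a b : ℕ) :
    (ker (f ^ a) ⊓ range f ⊔ ker (f ^ b)).comap N.subtype
      = ker (f.restrict (map_le_iff_le_comap.mp hfN) ^ a)
          ⊓ range (f.restrict (map_le_iff_le_comap.mp hfN))
        ⊔ ker (f.restrict (map_le_iff_le_comap.mp hfN) ^ b) := by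
  have hker := isGraded_ker_pow (fun _ hZ => hZ.comap hNU.codisjoint hNU.disjoint hfN hfU)
  have hA : IsGraded N U (ker (f ^ a) ⊓ range f) := by
    rw [ker_pow_inf_range]
    exact (hker (a + 1)).map hfN hfU
  rw [hA.comap_subtype_sup hNU.disjoint (hker b), comap_inf, comap_subtype_range hNU hfN hfU,
    comap_subtype_ker_pow hfN, comap_subtype_ker_pow hfN]

end Restrict

end Submodule

/-- higher Dirac index theorem for `O`: let `M ∈ O` and `V = M ⊗ S`
with its weight space decomposition `wt` (finite-dimensional weight spaces, preserved
by the Dirac operator `D`), and the ℤ₂-grading `V = V⁺ ⊕ V⁻` coming from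
`S = S⁺ ⊕ S⁻` (compatible with the weight decomposition, `D` odd).  Then for every
weight `μ`, with `H_top^k = ker D^{2k+1}/(ker D^{2k+1} ∩ im D + ker D^{2k})`:
`dim H_top(M)⁺_μ − dim H_top(M)⁻_μ = dim (M ⊗ S⁺)_μ − dim (M ⊗ S⁻)_μ`,
i.e. `I_top(M) = [M ⊗ S⁺] − [M ⊗ S⁻]` in the Grothendieck group of weight modules. -/
theorem stmt18 {Λ V : Type*} [DecidableEq Λ] [AddCommGroup V] [Module ℂ V]
    (wt : Λ → Submodule ℂ V)
    (hinternal : DirectSum.IsInternal wt)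
    (hfinwt : ∀ ν : Λ, FiniteDimensional ℂ (wt ν))
    (Vp Vm : Submodule ℂ V) (hcompl : IsCompl Vp Vm)
    (hgrade : ∀ ν : Λ, wt ν = (wt ν ⊓ Vp) ⊔ (wt ν ⊓ Vm))
    (D : Module.End ℂ V)
    (hDwt : ∀ ν : Λ, (wt ν).map D ≤ wt ν)
    (hoddp : Vp.map D ≤ Vm) (hoddm : Vm.map D ≤ Vp)
    (μ : Λ) :
    ∑ᶠ k : ℕ,
      (((Module.finrank ℂ (LinearMap.ker (D ^ (2 * k + 1)) ⊓ wt μ ⊓ Vp :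
            Submodule ℂ V) : ℤ)
        - Module.finrank ℂ (((LinearMap.ker (D ^ (2 * k + 1)) ⊓ LinearMap.range D
            ⊔ LinearMap.ker (D ^ (2 * k))) ⊓ wt μ ⊓ Vp : Submodule ℂ V)))
       - ((Module.finrank ℂ (LinearMap.ker (D ^ (2 * k + 1)) ⊓ wt μ ⊓ Vm :
            Submodule ℂ V) : ℤ)
        - Module.finrank ℂ (((LinearMap.ker (D ^ (2 * k + 1)) ⊓ LinearMap.range D
            ⊔ LinearMap.ker (D ^ (2 * k))) ⊓ wt μ ⊓ Vm : Submodule ℂ V))))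
      = (Module.finrank ℂ (wt μ ⊓ Vp : Submodule ℂ V) : ℤ)
        - Module.finrank ℂ (wt μ ⊓ Vm : Submodule ℂ V) := by
  have := hfinwt μ
  have hWU : IsCompl (wt μ) (⨆ (ν) (_ : ν ≠ μ), wt ν) :=
    ⟨hinternal.submodule_iSupIndep μ, codisjoint_iff.mpr <| by
      rw [← iSup_split_single, hinternal.submodule_iSup_eq_top]⟩
  have hDU : (⨆ (ν) (_ : ν ≠ μ), wt ν).map D ≤ ⨆ (ν) (_ : ν ≠ μ), wt ν := by
    simp only [Submodule.map_iSup]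
    exact iSup₂_mono fun ν _ => hDwt ν
  have hPQ := IsGraded.isCompl_comap_subtype hcompl.disjoint (hgrade μ)
  have h := finsum_superFinrank_eq_of_odd hPQ
    (E := D.restrict (map_le_iff_le_comap.mp (hDwt μ)))
    (by rintro _ ⟨x, hx, rfl⟩; exact hoddp (mem_map_of_mem hx))
    (by rintro _ ⟨x, hx, rfl⟩; exact hoddm (mem_map_of_mem hx))
  simp_rw [← comap_subtype_ker_pow_inf_range_sup hWU (hDwt μ) hDU,
    ← comap_subtype_ker_pow (hDwt μ), superFinrank_comap_subtype, finrank_comap_subtype] at h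
  rw [← h]
  exact finsum_congr fun k => by ring
end
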